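/- For all n ≥ 0: ∑_{k=0}^n [n choose k]_q (q-1)^k q^{r(n-k)} x^k = ∑_{k=0}^n C(n,k) (q-1)^k φ_k(x,r), where φ_k(x,r)=∑_j S(k,j,r)x^j. -/
import Mathlib


noncomputable section

open Finset Polynomial

/-- q-analogue [m] = (1-q^m)/(1-q) = 1 + q + ... + q^(m-1). -/
def qb (q : ℚ) (m : ℕ) : ℚ := ∑ i ∈ Finset.range m, q ^ i

/-- q-factorial [n]! -/
def qfact (q : ℚ) (n : ℕ) : ℚ := ∏ i ∈ Finset.range n, qb q (i + 1)

/-- Gaussian binomial coefficient [n choose k]_q via the q-Pascal recurrence. -/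
def qbinom (q : ℚ) : ℕ → ℕ → ℚ
  | _, 0 => 1
  | 0, _ + 1 => 0
  | n + 1, k + 1 => qbinom q n k + q ^ (k + 1) * qbinom q n (k + 1)

/-- Generalized q-Stirling numbers S(n,k,r). -/
def qS (q : ℚ) (r : ℕ) : ℕ → ℕ → ℚ
  | 0, 0 => 1
  | 0, _ + 1 => 0
  | n + 1, 0 => qb q r * qS q r n 0
  | n + 1, k + 1 => qS q r n k + qb q (k + 1 + r) * qS q r n (k + 1)

/-- Generalized falling factorial ⟨x⟩_{r,k} = ∏_{j=0}^{k-1} (x - [r+j]). -/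
def qfall (q : ℚ) (r : ℕ) (x : ℚ) (k : ℕ) : ℚ := ∏ j ∈ Finset.range k, (x - qb q (r + j))

/-- Generalized q-exponential polynomial φ_n(x,r). -/
def qphi (q : ℚ) (r : ℕ) (n : ℕ) (x : ℚ) : ℚ :=
  ∑ k ∈ Finset.range (n + 1), qS q r n k * x ^ k

lemma qbinom_eq_zero (q : ℚ) : ∀ n k, n < k → qbinom q n k = 0 := by
  intro n
  induction n with
  | zero =>
    intro k hk
    match k, hk with
    | k + 1, _ => rfl
  | succ n ih =>
    intro k hk
    match k, hk with
    | k + 1, hk =>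
      rw [qbinom, ih k (by omega), ih (k + 1) (by omega)]
      ring

lemma qS_eq_zero (q : ℚ) (r : ℕ) : ∀ n k, n < k → qS q r n k = 0 := by
  intro n
  induction n with
  | zero =>
    intro k hk
    match k, hk with
    | k + 1, _ => rfl
  | succ n ih =>
    intro k hk
    match k, hk with
    | k + 1, hk =>
      rw [qS, ih k (by omega), ih (k + 1) (by omega)]
      ring

lemma qb_mul (q : ℚ) (m : ℕ) : (q - 1) * qb q m = q ^ m - 1 := by
  rw [qb, mul_comm, geom_sum_mul]

lemma qphi_ext (q : ℚ) (r n N : ℕ) (h : n + 1 ≤ N) (x : ℚ) :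
    qphi q r n x = ∑ k ∈ Finset.range N, qS q r n k * x ^ k := by
  rw [qphi, Finset.sum_subset (Finset.range_subset_range.2 h)]
  intro k _ hk
  rw [Finset.mem_range, not_lt] at hk
  rw [qS_eq_zero q r n k (by omega), zero_mul]

lemma phi_step (q : ℚ) (r : ℕ) (n : ℕ) (x : ℚ) :
    qphi q r (n + 1) x =
      x * qphi q r n x + ∑ k ∈ Finset.range (n + 2), qb q (k + r) * qS q r n k * x ^ k := by
  rw [qphi, Finset.sum_range_succ']
  rw [show (∑ k ∈ Finset.range (n + 2), qb q (k + r) * qS q r n k * x ^ k) =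
      (∑ k ∈ Finset.range (n + 1), qb q (k + 1 + r) * qS q r n (k + 1) * x ^ (k + 1))
        + qb q (0 + r) * qS q r n 0 * x ^ 0 from Finset.sum_range_succ' _ _]
  rw [qphi, Finset.mul_sum]
  rw [show (∑ k ∈ Finset.range (n + 1), qS q r (n + 1) (k + 1) * x ^ (k + 1)) =
      ∑ k ∈ Finset.range (n + 1),
        (x * (qS q r n k * x ^ k) + qb q (k + 1 + r) * qS q r n (k + 1) * x ^ (k + 1)) from
    Finset.sum_congr rfl fun k _ => by rw [qS]; ring]
  rw [Finset.sum_add_distrib, qS]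
  simp only [Nat.zero_add]
  ring


lemma phi_rec (q : ℚ) (r : ℕ) (n : ℕ) (x : ℚ) :
    (q - 1) * qphi q r (n + 1) x =
      ((q - 1) * x - 1) * qphi q r n x + q ^ r * qphi q r n (q * x) := by
  have hB : (q - 1) * (∑ k ∈ Finset.range (n + 2), qb q (k + r) * qS q r n k * x ^ k) =
      q ^ r * (∑ k ∈ Finset.range (n + 2), qS q r n k * (q * x) ^ k) -
        ∑ k ∈ Finset.range (n + 2), qS q r n k * x ^ k := by
    rw [Finset.mul_sum, Finset.mul_sum, ← Finset.sum_sub_distrib]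
    refine Finset.sum_congr rfl fun k _ => ?_
    rw [show (q - 1) * (qb q (k + r) * qS q r n k * x ^ k) =
        ((q - 1) * qb q (k + r)) * (qS q r n k * x ^ k) by ring,
      qb_mul, pow_add, mul_pow]
    ring
  rw [phi_step, qphi_ext q r n (n + 2) (by omega) x, qphi_ext q r n (n + 2) (by omega) (q * x)]
  linear_combination hB

lemma L_rec (q : ℚ) (r : ℕ) (n : ℕ) (x : ℚ) :
    ∑ k ∈ Finset.range (n + 1 + 1),
        qbinom q (n + 1) k * (q - 1) ^ k * q ^ (r * (n + 1 - k)) * x ^ k =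
      (q - 1) * x * ∑ k ∈ Finset.range (n + 1),
          qbinom q n k * (q - 1) ^ k * q ^ (r * (n - k)) * x ^ k +
        q ^ r * ∑ k ∈ Finset.range (n + 1),
          qbinom q n k * (q - 1) ^ k * q ^ (r * (n - k)) * (q * x) ^ k := by
  rw [Finset.sum_range_succ']
  rw [show (∑ k ∈ Finset.range (n + 1),
        qbinom q n k * (q - 1) ^ k * q ^ (r * (n - k)) * (q * x) ^ k) =
      (∑ k ∈ Finset.range n,
        qbinom q n (k + 1) * (q - 1) ^ (k + 1) * q ^ (r * (n - (k + 1))) * (q * x) ^ (k + 1))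
        + qbinom q n 0 * (q - 1) ^ 0 * q ^ (r * (n - 0)) * (q * x) ^ 0 from
    Finset.sum_range_succ' _ _]
  have hterm : ∀ k ∈ Finset.range (n + 1),
      qbinom q (n + 1) (k + 1) * (q - 1) ^ (k + 1) * q ^ (r * (n + 1 - (k + 1))) * x ^ (k + 1) =
      (q - 1) * x * (qbinom q n k * (q - 1) ^ k * q ^ (r * (n - k)) * x ^ k)
        + qbinom q n (k + 1) * (q - 1) ^ (k + 1) * q ^ (r * (n - k)) * (q ^ (k + 1) * x ^ (k + 1)) := by
    intro k _
    rw [qbinom, Nat.succ_sub_succ]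
    ring
  rw [Finset.sum_congr rfl hterm, Finset.sum_add_distrib, ← Finset.mul_sum]
  rw [show (∑ k ∈ Finset.range (n + 1),
        qbinom q n (k + 1) * (q - 1) ^ (k + 1) * q ^ (r * (n - k)) * (q ^ (k + 1) * x ^ (k + 1))) =
      (∑ k ∈ Finset.range n,
        qbinom q n (k + 1) * (q - 1) ^ (k + 1) * q ^ (r * (n - k)) * (q ^ (k + 1) * x ^ (k + 1)))
        + qbinom q n (n + 1) * (q - 1) ^ (n + 1) * q ^ (r * (n - n)) * (q ^ (n + 1) * x ^ (n + 1)) from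
    Finset.sum_range_succ _ n, qbinom_eq_zero q n (n + 1) (by omega)]
  rw [show (∑ k ∈ Finset.range n,
        qbinom q n (k + 1) * (q - 1) ^ (k + 1) * q ^ (r * (n - k)) * (q ^ (k + 1) * x ^ (k + 1))) =
      ∑ k ∈ Finset.range n,
        q ^ r * (qbinom q n (k + 1) * (q - 1) ^ (k + 1) * q ^ (r * (n - (k + 1))) * (q * x) ^ (k + 1)) from
    Finset.sum_congr rfl fun k hk => by
      rw [Finset.mem_range] at hk
      rw [show n - k = (n - (k + 1)) + 1 from by omega, Nat.mul_succ, pow_add, mul_pow]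
      ring]
  rw [← Finset.mul_sum]
  rw [show qbinom q (n + 1) 0 = 1 from rfl, show qbinom q n 0 = 1 by cases n <;> rfl]
  rw [Nat.sub_zero, Nat.sub_zero, show r * (n + 1) = r * n + r from by ring, pow_add]
  ring

lemma R_rec (q : ℚ) (r : ℕ) (n : ℕ) (x : ℚ) :
    ∑ k ∈ Finset.range (n + 1 + 1), (Nat.choose (n + 1) k : ℚ) * (q - 1) ^ k * qphi q r k x =
      (q - 1) * x * ∑ k ∈ Finset.range (n + 1),
          (Nat.choose n k : ℚ) * (q - 1) ^ k * qphi q r k x +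
        q ^ r * ∑ k ∈ Finset.range (n + 1),
          (Nat.choose n k : ℚ) * (q - 1) ^ k * qphi q r k (q * x) := by
  rw [Finset.sum_range_succ']
  have hterm : ∀ k ∈ Finset.range (n + 1),
      (Nat.choose (n + 1) (k + 1) : ℚ) * (q - 1) ^ (k + 1) * qphi q r (k + 1) x =
      ((Nat.choose n k : ℚ) * (q - 1) ^ k *
          (((q - 1) * x - 1) * qphi q r k x + q ^ r * qphi q r k (q * x)))
        + (Nat.choose n (k + 1) : ℚ) * (q - 1) ^ (k + 1) * qphi q r (k + 1) x := by
    intro k _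
    rw [Nat.choose_succ_succ, ← phi_rec]
    push_cast
    ring
  rw [Finset.sum_congr rfl hterm, Finset.sum_add_distrib]
  have hsplit : ∑ k ∈ Finset.range (n + 1),
      (Nat.choose n k : ℚ) * (q - 1) ^ k *
        (((q - 1) * x - 1) * qphi q r k x + q ^ r * qphi q r k (q * x)) =
      ((q - 1) * x - 1) * ∑ k ∈ Finset.range (n + 1),
          (Nat.choose n k : ℚ) * (q - 1) ^ k * qphi q r k x
        + q ^ r * ∑ k ∈ Finset.range (n + 1),
          (Nat.choose n k : ℚ) * (q - 1) ^ k * qphi q r k (q * x) := by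
    rw [Finset.mul_sum, Finset.mul_sum, ← Finset.sum_add_distrib]
    exact Finset.sum_congr rfl fun k _ => by ring
  rw [hsplit]
  have hB : (∑ k ∈ Finset.range (n + 1),
        (Nat.choose n (k + 1) : ℚ) * (q - 1) ^ (k + 1) * qphi q r (k + 1) x)
      + (Nat.choose (n + 1) 0 : ℚ) * (q - 1) ^ 0 * qphi q r 0 x =
      ∑ k ∈ Finset.range (n + 1), (Nat.choose n k : ℚ) * (q - 1) ^ k * qphi q r k x := by
    rw [Finset.sum_range_succ _ n, Nat.choose_succ_self]
    rw [show (∑ k ∈ Finset.range (n + 1), (Nat.choose n k : ℚ) * (q - 1) ^ k * qphi q r k x) =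
        (∑ k ∈ Finset.range n, (Nat.choose n (k + 1) : ℚ) * (q - 1) ^ (k + 1) * qphi q r (k + 1) x)
          + (Nat.choose n 0 : ℚ) * (q - 1) ^ 0 * qphi q r 0 x from Finset.sum_range_succ' _ _]
    simp
  linear_combination hB


/-- ∑_k [n choose k]_q (q-1)^k q^{r(n-k)} x^k = ∑_k C(n,k) (q-1)^k φ_k(x,r). -/
theorem qphi_binomial_transform (q : ℚ) (r : ℕ) (n : ℕ) (x : ℚ) :
    ∑ k ∈ Finset.range (n + 1),
        qbinom q n k * (q - 1) ^ k * q ^ (r * (n - k)) * x ^ k =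
      ∑ k ∈ Finset.range (n + 1), (Nat.choose n k : ℚ) * (q - 1) ^ k * qphi q r k x := by
  induction n generalizing x with
  | zero => simp [qbinom, qphi, qS]
  | succ n ih => rw [L_rec, R_rec, ih x, ih (q * x)]
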